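/- arXiv:2210.03006 — 2 statements merged into one kernel-verified Lean document; each statement's English description precedes it below -/
import Mathlib

section
/- Let n, k ≥ 1, and let α > 0 with α ≤ n^{k−1}. For each e ∈ [n]^k let f_e : {−1,1}^n → [−1,1] be an arbitrary fixed function, let (X_e)_{e∈[n]^k} be i.i.d. Poisson(α/n^{k−1}) random variables, and set H(σ) = (1/α) Σ_{e∈[n]^k} X_e·f_e(σ). Then for all x ≥ 0: P(|max_{σ∈{−1,1}^n} H(σ) − E[max_{σ∈{−1,1}^n} H(σ)]| ≥ x) ≤ 2·exp(−x²·α/(4·(n + x))). -/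
/-!
Since `|f_e| ≤ 1`, `X ↦ max_σ H(σ)` is `α⁻¹`-Lipschitz for the `ℓ¹` distance on clause counts.
For a `c`-Lipschitz function `h` of one `N ∼ Poisson(r)`, expanding `e^{t h(N)}` around `h(0)`
and dominating the remainder by that of `e^{t c N}` gives
`𝔼 e^{t h(N)} ≤ exp (t 𝔼 h(N) + ψ_r(t c))` with `ψ_r(u) = 𝔼 e^{uN} - 1 - u 𝔼 N`.
Integrating out one coordinate at a time tensorizes this over the `n^k` independent counts,
and Chernoff's bound controls both tails by `exp (n^k ψ_r(t / α) - t x)`.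
As `r = α / n^(k-1) ≤ 1`, convexity gives `ψ_r(s) ≤ r (e^{e^s - 1} - 1 - s) ≤ r s² / (1 - 2s)`,
and `t = α x / (2 (n + x))` makes the exponent `-x² α / (4 (n + x))`.
-/

open MeasureTheory ProbabilityTheory

noncomputable section

/-- The law of the Poisson clause multiplicities: i.i.d. `Poisson(α/n^(k-1))` indexed
by `e ∈ [n]^k`. -/
def poisMultMeasure (n k : ℕ) (α : ℝ) : Measure ((Fin k → Fin n) → ℕ) :=
  Measure.pi fun _ => (poissonPMF (α / (n : ℝ) ^ (k - 1)).toNNReal).toMeasure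

open Real
open scoped NNReal ENNReal Nat

namespace Real

theorem exp_sub_one_sub_le_of_abs_le {z c : ℝ} (hz : |z| ≤ c) :
    exp z - 1 - z ≤ exp c - 1 - c := by
  have h_abs : exp z - 1 - z ≤ exp |z| - 1 - |z| := by
    rcases le_total 0 z with h | h
    · rw [abs_of_nonneg h]
    · have := self_le_sinh_iff.2 (neg_nonneg.2 h)
      rw [sinh_eq, neg_neg] at this
      rw [abs_of_nonpos h]
      linarith
  have h_mono : exp |z| - 1 - |z| ≤ exp c - 1 - c := by
    have h1 := add_one_le_exp (c - |z|)
    have h2 : exp c = exp |z| * exp (c - |z|) := by rw [← exp_add, add_sub_cancel]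
    nlinarith [one_le_exp (abs_nonneg z)]
  exact h_abs.trans h_mono

theorem exp_le_cubic {s : ℝ} (h0 : 0 ≤ s) (h1 : s ≤ 1) :
    exp s ≤ 1 + s + s ^ 2 / 2 + 2 / 9 * s ^ 3 := by
  have := exp_bound' h0 h1 (n := 3) (by norm_num)
  norm_num [Finset.sum_range_succ, Nat.factorial] at this
  linarith

theorem one_sub_two_mul_mul_exp_exp_sub_one_le {s : ℝ} (h0 : 0 ≤ s) (h1 : 2 * s ≤ 1) :
    (1 - 2 * s) * (exp (exp s - 1) - 1 - s) ≤ s ^ 2 := by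
  set q := s + s ^ 2 / 2 + 2 / 9 * s ^ 3 with hq
  have hy0 : 0 ≤ exp s - 1 := by linarith [one_le_exp h0]
  have hyq : exp s - 1 ≤ q := by linarith [exp_le_cubic h0 (by linarith)]
  have hq1 : q ≤ 1 := by nlinarith [pow_nonneg h0 3]
  have hey : exp (exp s - 1) ≤ 1 + q + q ^ 2 / 2 + 2 / 9 * q ^ 3 := by
    have := exp_le_cubic hy0 (hyq.trans hq1)
    have : (exp s - 1) ^ 2 ≤ q ^ 2 := pow_le_pow_left₀ hy0 hyq 2
    have : (exp s - 1) ^ 3 ≤ q ^ 3 := pow_le_pow_left₀ hy0 hyq 3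
    linarith
  calc (1 - 2 * s) * (exp (exp s - 1) - 1 - s)
      ≤ (1 - 2 * s) * (q + q ^ 2 / 2 + 2 / 9 * q ^ 3 - s) :=
        mul_le_mul_of_nonneg_left (by linarith) (by linarith)
    _ ≤ s ^ 2 := by
        simp only [q]
        nlinarith [pow_nonneg h0 3, pow_nonneg h0 4, pow_nonneg h0 5, pow_nonneg h0 6,
          pow_nonneg h0 7, pow_nonneg h0 8, pow_nonneg h0 9, pow_nonneg h0 10]

theorem exp_mul_sub_one_le_mul {r y : ℝ} (hr0 : 0 ≤ r) (hr1 : r ≤ 1) :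
    exp (r * y) - 1 ≤ r * (exp y - 1) := by
  have h := convexOn_exp.2 (Set.mem_univ 0) (Set.mem_univ y) (sub_nonneg.2 hr1) hr0 (by ring)
  simp only [smul_eq_mul, mul_zero, zero_add, exp_zero, mul_one] at h
  linarith

end Real

theorem Finset.abs_sup'_sub_sup'_le {α β : Type*} [AddCommGroup α] [LinearOrder α]
    [IsOrderedAddMonoid α] {s : Finset β} (hs : s.Nonempty) {f g : β → α} {d : α}
    (h : ∀ b ∈ s, |f b - g b| ≤ d) : |s.sup' hs f - s.sup' hs g| ≤ d := by
  rw [abs_sub_le_iff]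
  constructor <;> rw [sub_le_iff_le_add] <;> refine Finset.sup'_le _ _ fun b hb => ?_
  · exact (sub_le_iff_le_add.1 (abs_sub_le_iff.1 (h b hb)).1).trans
      (add_le_add le_rfl (Finset.le_sup' g hb))
  · exact (sub_le_iff_le_add.1 (abs_sub_le_iff.1 (h b hb)).2).trans
      (add_le_add le_rfl (Finset.le_sup' f hb))

namespace ProbabilityTheory

set_option linter.deprecated false in
theorem poissonPMF_toMeasure (r : ℝ≥0) : (poissonPMF r).toMeasure = poissonMeasure r := by
  refine Measure.ext_iff_singleton.2 fun n => ?_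
  rw [PMF.toMeasure_apply_singleton _ _ (measurableSet_singleton n), poissonMeasure_singleton,
    ← poissonPMFReal_ofReal_eq_poissonPMF, poissonPMFReal]

theorem hasSum_poissonMeasure_mul_exp (r : ℝ≥0) (u : ℝ) :
    HasSum (fun n : ℕ => exp (-r) * r ^ n / n ! * exp (u * n)) (exp (r * (exp u - 1))) := by
  have h := (NormedSpace.expSeries_div_hasSum_exp ((r : ℝ) * exp u)).mul_left (exp (-r))
  rw [← exp_eq_exp_ℝ, ← exp_add] at h
  have hf : (fun n : ℕ => exp (-r) * r ^ n / n ! * exp (u * n)) =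
      fun n => exp (-r) * ((r * exp u) ^ n / n !) := by
    ext n
    rw [mul_pow, ← exp_nat_mul, mul_comm u]
    ring
  rw [hf, show (r : ℝ) * (exp u - 1) = -r + r * exp u by ring]
  exact h

theorem integrable_exp_mul_poissonMeasure (r : ℝ≥0) (u : ℝ) :
    Integrable (fun n : ℕ => exp (u * n)) (poissonMeasure r) := by
  simpa [integrable_poissonMeasure_iff, abs_of_pos (exp_pos _)]
    using (hasSum_poissonMeasure_mul_exp r u).summable

theorem integral_exp_mul_poissonMeasure (r : ℝ≥0) (u : ℝ) :
    ∫ n, exp (u * n) ∂poissonMeasure r = exp (r * (exp u - 1)) := by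
  simpa [integral_poissonMeasure] using (hasSum_poissonMeasure_mul_exp r u).tsum_eq

theorem hasSum_poissonMeasure_mul_natCast (r : ℝ≥0) :
    HasSum (fun n : ℕ => exp (-r) * r ^ n / n ! * n) r := by
  refine (hasSum_nat_add_iff' 1).1 ?_
  have hf : (fun n : ℕ => exp (-r) * r ^ (n + 1) / (n + 1)! * (n + 1 : ℕ)) =
      fun n => r * (exp (-r) * r ^ n / n !) := by
    ext n
    rw [Nat.factorial_succ]
    push_cast
    field_simp
    ring
  have h := (hasSum_one_poissonMeasure r).mul_left (r : ℝ)
  rw [mul_one, ← hf] at h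
  simpa using h

theorem integrable_natCast_poissonMeasure (r : ℝ≥0) :
    Integrable (fun n : ℕ => (n : ℝ)) (poissonMeasure r) := by
  simpa [integrable_poissonMeasure_iff] using (hasSum_poissonMeasure_mul_natCast r).summable

theorem integral_natCast_poissonMeasure (r : ℝ≥0) :
    ∫ n, (n : ℝ) ∂poissonMeasure r = r := by
  simpa [integral_poissonMeasure] using (hasSum_poissonMeasure_mul_natCast r).tsum_eq

theorem integrable_of_lipschitz_nat {μ : Measure ℕ} [IsFiniteMeasure μ]
    (hμ : Integrable (fun n : ℕ => (n : ℝ)) μ) {c : ℝ} {h : ℕ → ℝ}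
    (hh : ∀ a b : ℕ, |h a - h b| ≤ c * |(a : ℝ) - b|) : Integrable h μ := by
  refine ((integrable_const |h 0|).add (hμ.const_mul c)).mono' .of_discrete
    (ae_of_all _ fun n => ?_)
  have := hh n 0
  rw [Nat.cast_zero, sub_zero, Nat.abs_cast] at this
  rw [norm_eq_abs, Pi.add_apply]
  linarith [abs_sub_abs_le_abs_sub (h n) (h 0)]

/-- `𝔼[e^{uN}] - 1 - u 𝔼[N]` for `N ∼ Poisson(r)`. -/
def poissonMgfExcess (r : ℝ≥0) (u : ℝ) : ℝ := exp (r * (exp u - 1)) - 1 - u * r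

theorem lintegral_exp_le_of_lipschitz_poissonMeasure (r : ℝ≥0) {c t : ℝ} (ht : 0 ≤ t)
    {h : ℕ → ℝ} (hh : ∀ a b : ℕ, |h a - h b| ≤ c * |(a : ℝ) - b|) :
    ∫⁻ n, ENNReal.ofReal (exp (t * h n)) ∂poissonMeasure r ≤
      ENNReal.ofReal (exp (t * ∫ n, h n ∂poissonMeasure r + poissonMgfExcess r (t * c))) := by
  set μ := poissonMeasure r
  have hint : Integrable h μ := integrable_of_lipschitz_nat (integrable_natCast_poissonMeasure r) hh
  -- `|h n - h 0| ≤ c n`, so the remainder of `e^{t h n}` expanded at `h 0` is dominated by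
  -- that of `e^{t c n}`, whose mean is explicit
  set g : ℕ → ℝ := fun n => exp (t * h 0) * (t * (h n - h 0) + exp (t * c * n) - t * c * n)
  have hle : ∀ n, exp (t * h n) ≤ g n := fun n => by
    have hz : |t * (h n - h 0)| ≤ t * c * n := by
      rw [abs_mul, abs_of_nonneg ht, mul_assoc]
      gcongr
      simpa using hh n 0
    have := exp_sub_one_sub_le_of_abs_le hz
    calc exp (t * h n) = exp (t * h 0) * exp (t * (h n - h 0)) := by rw [← exp_add]; ring_nf
      _ ≤ g n := mul_le_mul_of_nonneg_left (by linarith) (exp_pos _).le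
  have hlin : Integrable (fun n => t * (h n - h 0)) μ := (hint.sub (integrable_const _)).const_mul t
  have hexp := integrable_exp_mul_poissonMeasure r (t * c)
  have hmean := (integrable_natCast_poissonMeasure r).const_mul (t * c)
  have hg_int : Integrable g μ := ((hlin.add hexp).sub hmean).const_mul _
  have hg_integral : ∫ n, g n ∂μ =
      exp (t * h 0) * (1 + (t * (∫ n, h n ∂μ - h 0) + poissonMgfExcess r (t * c))) := by
    simp only [g]
    rw [integral_const_mul, integral_sub, integral_add, integral_const_mul, integral_sub,
      integral_const_mul, integral_exp_mul_poissonMeasure, integral_natCast_poissonMeasure]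
    · simp only [integral_const, probReal_univ, smul_eq_mul, one_mul, poissonMgfExcess]
      ring
    exacts [hint, integrable_const _, hlin, hexp, hlin.add hexp, hmean]
  calc ∫⁻ n, ENNReal.ofReal (exp (t * h n)) ∂μ
      ≤ ∫⁻ n, ENNReal.ofReal (g n) ∂μ := lintegral_mono fun n => ENNReal.ofReal_le_ofReal (hle n)
    _ = ENNReal.ofReal (∫ n, g n ∂μ) :=
      (ofReal_integral_eq_lintegral_ofReal hg_int
        (ae_of_all _ fun n => (exp_pos _).le.trans (hle n))).symm
    _ ≤ ENNReal.ofReal (exp (t * ∫ n, h n ∂μ + poissonMgfExcess r (t * c))) := by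
      rw [hg_integral]
      refine ENNReal.ofReal_le_ofReal ?_
      set a := t * (∫ n, h n ∂μ - h 0) + poissonMgfExcess r (t * c) with ha
      calc exp (t * h 0) * (1 + a) ≤ exp (t * h 0) * exp a := by
            gcongr; linarith [add_one_le_exp a]
        _ = _ := by rw [← exp_add, ha]; ring_nf

theorem poissonMgfExcess_le (r : ℝ≥0) (hr : r ≤ 1) {s : ℝ} (h0 : 0 ≤ s) (h1 : 2 * s ≤ 1) :
    (1 - 2 * s) * poissonMgfExcess r s ≤ r * s ^ 2 := by
  have hconv := exp_mul_sub_one_le_mul r.coe_nonneg (NNReal.coe_le_one.2 hr) (y := exp s - 1)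
  calc (1 - 2 * s) * poissonMgfExcess r s
      ≤ (1 - 2 * s) * (r * (exp (exp s - 1) - 1 - s)) := by
        unfold poissonMgfExcess
        gcongr
        linarith
    _ ≤ r * s ^ 2 := by
        rw [mul_left_comm]
        exact mul_le_mul_of_nonneg_left (one_sub_two_mul_mul_exp_exp_sub_one_le h0 h1) r.coe_nonneg

section Tensorization

def IsL1Lipschitz {ι : Type*} [Fintype ι] (c : ℝ) (F : (ι → ℕ) → ℝ) : Prop :=
  ∀ x y, |F x - F y| ≤ c * ∑ i, |(x i : ℝ) - y i|

variable {μ : Measure ℕ} [IsProbabilityMeasure μ]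

theorem IsL1Lipschitz.integrable_pi {ι : Type*} [Fintype ι] {c : ℝ} {F : (ι → ℕ) → ℝ}
    (hF : IsL1Lipschitz c F) (hμ : Integrable (fun n : ℕ => (n : ℝ)) μ) :
    Integrable F (Measure.pi fun _ => μ) := by
  have hsum : Integrable (fun x : ι → ℕ => ∑ i, (x i : ℝ)) (Measure.pi fun _ => μ) :=
    integrable_finsetSum _ fun i _ => integrable_comp_eval hμ
  refine ((integrable_const |F 0|).add (hsum.const_mul c)).mono' .of_discrete
    (ae_of_all _ fun x => ?_)
  have := hF x 0
  simp only [Pi.zero_apply, Nat.cast_zero, sub_zero, Nat.abs_cast] at this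
  rw [norm_eq_abs, Pi.add_apply]
  linarith [abs_sub_abs_le_abs_sub (F x) (F 0)]

variable {m : ℕ}

theorem lintegral_pi_fin_succ (g : (Fin (m + 1) → ℕ) → ℝ≥0∞) :
    ∫⁻ x, g x ∂(Measure.pi fun _ => μ) =
      ∫⁻ a, ∫⁻ y, g (Fin.cons a y) ∂(Measure.pi fun _ => μ) ∂μ := by
  rw [← ((measurePreserving_piFinSuccAbove (fun _ => μ) 0).symm).lintegral_comp_emb
    (MeasurableEquiv.measurableEmbedding _), lintegral_prod _ Measurable.of_discrete.aemeasurable]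
  simp only [MeasurableEquiv.piFinSuccAbove_symm_apply, Fin.insertNthEquiv_zero]
  rfl

theorem integral_pi_fin_succ {F : (Fin (m + 1) → ℕ) → ℝ}
    (hF : Integrable F (Measure.pi fun _ => μ)) :
    ∫ x, F x ∂(Measure.pi fun _ => μ) = ∫ a, ∫ y, F (Fin.cons a y) ∂(Measure.pi fun _ => μ) ∂μ := by
  have hmp := (measurePreserving_piFinSuccAbove (fun _ : Fin (m + 1) => μ) 0).symm
  have hint : Integrable (fun z => F ((MeasurableEquiv.piFinSuccAbove _ 0).symm z))
      (μ.prod (Measure.pi fun _ => μ)) :=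
    (hmp.integrable_comp_emb (MeasurableEquiv.measurableEmbedding _)).2 hF
  rw [← hmp.integral_comp (MeasurableEquiv.measurableEmbedding _), integral_prod _ hint]
  simp only [MeasurableEquiv.piFinSuccAbove_symm_apply, Fin.insertNthEquiv_zero]
  rfl

theorem IsL1Lipschitz.comp_cons {c : ℝ} {F : (Fin (m + 1) → ℕ) → ℝ} (hF : IsL1Lipschitz c F)
    (a : ℕ) : IsL1Lipschitz c fun y : Fin m → ℕ => F (Fin.cons a y) := fun y y' => by
  simpa [Fin.sum_univ_succ] using hF (Fin.cons a y) (Fin.cons a y')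

theorem abs_integral_comp_cons_sub_le (hμ : Integrable (fun n : ℕ => (n : ℝ)) μ) {c : ℝ}
    {F : (Fin (m + 1) → ℕ) → ℝ} (hF : IsL1Lipschitz c F) (a b : ℕ) :
    |∫ y, F (Fin.cons a y) ∂(Measure.pi fun _ => μ) -
        ∫ y, F (Fin.cons b y) ∂(Measure.pi fun _ => μ)|
      ≤ c * |(a : ℝ) - b| := by
  have hint : ∀ a, Integrable (fun y => F (Fin.cons a y)) (Measure.pi fun _ => μ) :=
    fun a => (hF.comp_cons a).integrable_pi hμ
  rw [← integral_sub (hint a) (hint b), ← norm_eq_abs]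
  refine (norm_integral_le_of_norm_le_const (C := c * |(a : ℝ) - b|)
    (ae_of_all _ fun y => ?_)).trans_eq (by simp)
  simpa [Fin.sum_univ_succ] using hF (Fin.cons a y) (Fin.cons b y)

theorem lintegral_exp_le_of_isL1Lipschitz_fin (hμ : Integrable (fun n : ℕ => (n : ℝ)) μ)
    {c t ψ : ℝ} (h1 : ∀ h : ℕ → ℝ, (∀ a b : ℕ, |h a - h b| ≤ c * |(a : ℝ) - b|) →
      ∫⁻ n, ENNReal.ofReal (exp (t * h n)) ∂μ ≤ ENNReal.ofReal (exp (t * ∫ n, h n ∂μ + ψ))) :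
    ∀ (m : ℕ) (F : (Fin m → ℕ) → ℝ), IsL1Lipschitz c F →
      ∫⁻ x, ENNReal.ofReal (exp (t * F x)) ∂(Measure.pi fun _ => μ) ≤
        ENNReal.ofReal (exp (t * ∫ x, F x ∂(Measure.pi fun _ => μ) + m * ψ))
  | 0, F, _ => by
    rw [Measure.pi_of_empty, lintegral_dirac, integral_dirac]
    simp
  | m + 1, F, hF => by
    set G : ℕ → ℝ := fun a => ∫ y, F (Fin.cons a y) ∂(Measure.pi fun _ => μ)
    have hG := h1 G (abs_integral_comp_cons_sub_le hμ hF)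
    have hsec : ∀ a, ∫⁻ y, ENNReal.ofReal (exp (t * F (Fin.cons a y))) ∂(Measure.pi fun _ => μ)
        ≤ ENNReal.ofReal (exp (t * G a)) * ENNReal.ofReal (exp (m * ψ)) := fun a => by
      rw [← ENNReal.ofReal_mul (exp_pos _).le, ← exp_add]
      exact lintegral_exp_le_of_isL1Lipschitz_fin hμ h1 m _ (hF.comp_cons a)
    calc ∫⁻ x, ENNReal.ofReal (exp (t * F x)) ∂(Measure.pi fun _ => μ)
        ≤ ∫⁻ a, ENNReal.ofReal (exp (t * G a)) * ENNReal.ofReal (exp (m * ψ)) ∂μ := by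
          rw [lintegral_pi_fin_succ]; exact lintegral_mono hsec
      _ = (∫⁻ a, ENNReal.ofReal (exp (t * G a)) ∂μ) * ENNReal.ofReal (exp (m * ψ)) :=
          lintegral_mul_const _ Measurable.of_discrete
      _ ≤ ENNReal.ofReal (exp (t * ∫ a, G a ∂μ + ψ)) * ENNReal.ofReal (exp (m * ψ)) := by
          gcongr
      _ = _ := by
          rw [← ENNReal.ofReal_mul (exp_pos _).le, ← exp_add,
            integral_pi_fin_succ (hF.integrable_pi hμ)]
          simp only [G]
          push_cast
          ring_nf

theorem lintegral_exp_le_of_isL1Lipschitz {ι : Type*} [Fintype ι]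
    (hμ : Integrable (fun n : ℕ => (n : ℝ)) μ)
    {c t ψ : ℝ} (h1 : ∀ h : ℕ → ℝ, (∀ a b : ℕ, |h a - h b| ≤ c * |(a : ℝ) - b|) →
      ∫⁻ n, ENNReal.ofReal (exp (t * h n)) ∂μ ≤ ENNReal.ofReal (exp (t * ∫ n, h n ∂μ + ψ)))
    {F : (ι → ℕ) → ℝ} (hF : IsL1Lipschitz c F) :
    ∫⁻ x, ENNReal.ofReal (exp (t * F x)) ∂(Measure.pi fun _ => μ) ≤
      ENNReal.ofReal (exp (t * ∫ x, F x ∂(Measure.pi fun _ => μ) + Fintype.card ι * ψ)) := by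
  set e := (Fintype.equivFin ι).symm
  have hmp := measurePreserving_piCongrLeft (fun _ : ι => μ) e
  have he : ∀ (z : Fin (Fintype.card ι) → ℕ) i,
      MeasurableEquiv.piCongrLeft (fun _ => ℕ) e z (e i) = z i := fun z i => by
    rw [MeasurableEquiv.coe_piCongrLeft, Equiv.piCongrLeft_apply_apply]
  rw [← hmp.lintegral_comp_emb (MeasurableEquiv.measurableEmbedding _),
    ← hmp.integral_comp (MeasurableEquiv.measurableEmbedding _)]
  refine lintegral_exp_le_of_isL1Lipschitz_fin hμ h1 _ _ fun z w => ?_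
  refine (hF _ _).trans_eq ?_
  rw [← e.sum_comp]
  simp only [he]

end Tensorization

section Chernoff

variable {Ω : Type*} [MeasurableSpace Ω] {μ : Measure Ω} {F : Ω → ℝ} {t m K x : ℝ}

theorem measure_add_le_le_of_lintegral_exp_le (hF : Measurable F) (ht : 0 ≤ t)
    (h : ∫⁻ ω, ENNReal.ofReal (exp (t * F ω)) ∂μ ≤ ENNReal.ofReal (exp (t * m + K))) :
    μ {ω | m + x ≤ F ω} ≤ ENNReal.ofReal (exp (K - t * x)) := by
  have hsub : {ω | m + x ≤ F ω} ⊆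
      {ω | ENNReal.ofReal (exp (t * (m + x))) ≤ ENNReal.ofReal (exp (t * F ω))} :=
    fun ω (hω : m + x ≤ F ω) => ENNReal.ofReal_le_ofReal (exp_le_exp.2 (by gcongr))
  calc μ {ω | m + x ≤ F ω}
      ≤ (∫⁻ ω, ENNReal.ofReal (exp (t * F ω)) ∂μ) / ENNReal.ofReal (exp (t * (m + x))) :=
        (measure_mono hsub).trans (meas_ge_le_lintegral_div (by fun_prop)
          (by simp [exp_pos]) ENNReal.ofReal_ne_top)
    _ ≤ ENNReal.ofReal (exp (t * m + K)) / ENNReal.ofReal (exp (t * (m + x))) := by gcongr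
    _ = ENNReal.ofReal (exp (K - t * x)) := by
        rw [← ENNReal.ofReal_div_of_pos (exp_pos _), ← exp_sub]
        ring_nf

theorem measure_le_abs_sub_le_of_lintegral_exp_le (hF : Measurable F) (ht : 0 ≤ t)
    (hpos : ∫⁻ ω, ENNReal.ofReal (exp (t * F ω)) ∂μ ≤ ENNReal.ofReal (exp (t * m + K)))
    (hneg : ∫⁻ ω, ENNReal.ofReal (exp (t * -F ω)) ∂μ ≤ ENNReal.ofReal (exp (t * -m + K))) :
    μ {ω | x ≤ |F ω - m|} ≤ ENNReal.ofReal (2 * exp (K - t * x)) := by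
  have hsub : {ω | x ≤ |F ω - m|} ⊆ {ω | m + x ≤ F ω} ∪ {ω | -m + x ≤ -F ω} :=
    fun ω (hω : x ≤ |F ω - m|) => by
    rcases le_abs'.1 hω with h | h
    exacts [Or.inr (show -m + x ≤ -F ω by linarith), Or.inl (show m + x ≤ F ω by linarith)]
  calc μ {ω | x ≤ |F ω - m|}
      ≤ μ {ω | m + x ≤ F ω} + μ {ω | -m + x ≤ -F ω} :=
        (measure_mono hsub).trans (measure_union_le _ _)
    _ ≤ ENNReal.ofReal (exp (K - t * x)) + ENNReal.ofReal (exp (K - t * x)) :=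
        add_le_add (measure_add_le_le_of_lintegral_exp_le hF ht hpos)
          (measure_add_le_le_of_lintegral_exp_le hF.neg ht hneg)
    _ = ENNReal.ofReal (2 * exp (K - t * x)) := by
        rw [← ENNReal.ofReal_add (exp_pos _).le (exp_pos _).le, two_mul]

end Chernoff

theorem measure_le_abs_sub_integral_le_of_isL1Lipschitz {ι : Type*} [Fintype ι] (r : ℝ≥0)
    {c t x : ℝ} (ht : 0 ≤ t) {F : (ι → ℕ) → ℝ} (hF : IsL1Lipschitz c F) :
    (Measure.pi fun _ : ι => poissonMeasure r)
        {X | x ≤ |F X - ∫ Y, F Y ∂(Measure.pi fun _ : ι => poissonMeasure r)|} ≤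
      ENNReal.ofReal (2 * exp (Fintype.card ι * poissonMgfExcess r (t * c) - t * x)) := by
  have h1 := fun (h : ℕ → ℝ) (hh : ∀ a b : ℕ, |h a - h b| ≤ c * |(a : ℝ) - b|) =>
    lintegral_exp_le_of_lipschitz_poissonMeasure r ht hh
  have hμ := integrable_natCast_poissonMeasure r
  have hF' : IsL1Lipschitz c (-F) := fun X Y => by
    rw [Pi.neg_apply, Pi.neg_apply, ← abs_neg]; convert hF X Y using 2; ring
  refine measure_le_abs_sub_le_of_lintegral_exp_le .of_discrete ht
    (lintegral_exp_le_of_isL1Lipschitz hμ h1 hF) ?_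
  simpa [integral_neg] using lintegral_exp_le_of_isL1Lipschitz hμ h1 hF'

end ProbabilityTheory

theorem isL1Lipschitz_sup'_mul_sum {ι σ : Type*} [Fintype ι] [Fintype σ] [Nonempty σ]
    {a : ℝ} (ha : 0 ≤ a) {f : ι → σ → ℝ} (hf : ∀ e s, |f e s| ≤ 1) :
    IsL1Lipschitz a fun X => Finset.univ.sup' Finset.univ_nonempty
      fun s => a * ∑ e, (X e : ℝ) * f e s := fun X Y => by
  refine Finset.abs_sup'_sub_sup'_le _ fun s _ => ?_
  rw [← mul_sub, ← Finset.sum_sub_distrib, abs_mul, abs_of_nonneg ha]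
  gcongr
  refine (Finset.abs_sum_le_sum_abs _ _).trans (Finset.sum_le_sum fun e _ => ?_)
  rw [← sub_mul, abs_mul]
  exact mul_le_of_le_one_right (abs_nonneg _) (hf e s)

theorem card_mul_poissonMgfExcess_sub_le {n x α N : ℝ} {r : ℝ≥0} (hn : 0 < n) (hx : 0 ≤ x)
    (hr : r ≤ 1) (hN : 0 ≤ N) (hNr : N * r = α * n) :
    N * poissonMgfExcess r (x / (2 * (n + x))) - x / (2 * (n + x)) * α * x ≤
      -(x ^ 2 * α) / (4 * (n + x)) := by
  have hnx : 0 < n + x := by linarith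
  set s := x / (2 * (n + x)) with hs
  have h1s : 1 - 2 * s = n / (n + x) := by rw [hs]; field_simp; ring
  have hs1 : 2 * s ≤ 1 := by rw [← sub_nonneg, h1s]; positivity
  have hψ := mul_le_mul_of_nonneg_left (poissonMgfExcess_le r hr (by positivity) hs1) hN
  have key : N * poissonMgfExcess r s ≤ α * (n + x) * s ^ 2 := by
    refine le_of_mul_le_mul_left ?_ hn
    calc n * (N * poissonMgfExcess r s)
        = (n + x) * (N * ((1 - 2 * s) * poissonMgfExcess r s)) := by rw [h1s]; field_simp
      _ ≤ (n + x) * (N * (r * s ^ 2)) := mul_le_mul_of_nonneg_left hψ hnx.le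
      _ = n * (α * (n + x) * s ^ 2) := by rw [← mul_assoc N, hNr]; ring
  calc N * poissonMgfExcess r s - s * α * x ≤ α * (n + x) * s ^ 2 - s * α * x := by linarith
    _ = -(x ^ 2 * α) / (4 * (n + x)) := by rw [hs]; field_simp; ring

/-- Concentration of `max_σ H(σ)` for the Poisson-model random CSP
`H(σ) = (1/α) Σ_e X_e f_e(σ)`. -/
theorem poisson_max_concentration (n k : ℕ) (hn : 1 ≤ n) (hk : 1 ≤ k)
    (α : ℝ) (hα : 0 < α) (hαn : α ≤ (n : ℝ) ^ (k - 1))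
    (fe : (Fin k → Fin n) → (Fin n → Bool) → ℝ)
    (hfe : ∀ e σ, fe e σ ∈ Set.Icc (-1 : ℝ) 1) (x : ℝ) (hx : 0 ≤ x) :
    poisMultMeasure n k α
        {X | x ≤ |Finset.univ.sup' Finset.univ_nonempty
              (fun σ : Fin n → Bool => α⁻¹ * ∑ e : Fin k → Fin n, (X e : ℝ) * fe e σ) -
            ∫ Y, Finset.univ.sup' Finset.univ_nonempty
              (fun σ : Fin n → Bool => α⁻¹ * ∑ e : Fin k → Fin n, (Y e : ℝ) * fe e σ)
              ∂ poisMultMeasure n k α|}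
      ≤ ENNReal.ofReal (2 * Real.exp (-(x ^ 2 * α) / (4 * ((n : ℝ) + x)))) := by
  have hn0 : (0 : ℝ) < n := by exact_mod_cast hn
  have hpow : (0 : ℝ) < (n : ℝ) ^ (k - 1) := by positivity
  set r := (α / (n : ℝ) ^ (k - 1)).toNNReal
  have hr : (r : ℝ) = α / (n : ℝ) ^ (k - 1) := Real.coe_toNNReal _ (by positivity)
  have hr1 : r ≤ 1 := Real.toNNReal_le_one.2 ((div_le_one hpow).2 hαn)
  have hNr : (Fintype.card (Fin k → Fin n) : ℝ) * r = α * n := by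
    rw [hr, Fintype.card_fun, Fintype.card_fin, Fintype.card_fin, Nat.cast_pow,
      ← Nat.sub_add_cancel hk, pow_succ, Nat.add_sub_cancel]
    field_simp
  have hlip := isL1Lipschitz_sup'_mul_sum (inv_nonneg.2 hα.le) fun e σ => abs_le.2 (hfe e σ)
  rw [poisMultMeasure, poissonPMF_toMeasure]
  refine (measure_le_abs_sub_integral_le_of_isL1Lipschitz r (t := x / (2 * (n + x)) * α)
    (by positivity) hlip).trans ?_
  rw [mul_inv_cancel_right₀ hα.ne']
  gcongr
  exact card_mul_poissonMgfExcess_sub_le hn0 hx hr1 (by positivity) hNr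

end
end

section
/- Let f : ℕ → ℝ satisfy |f(j)| ≤ C·K^j for some constants C, K > 0. Then the function λ ↦ E_{X∼Poisson(λ)}[f(X)] = Σ_{j=0}^∞ f(j)·e^{−λ}·λ^j/j! is differentiable on (0,∞), and its derivative at λ equals E_{X∼Poisson(λ)}[f(X+1) − f(X)]. -/
/-!
The Poisson expectation is `e^{-λ} g(λ)` with `g(λ) = ∑ f j λ^j / j!` the exponential
generating function of `f`. The growth bound `|f j| ≤ C K^j` makes `g` entire, and
differentiating it termwise shows that `g'` is the exponential generating function of
`j ↦ f (j + 1)`. The product rule then gives `e^{-λ} (g'(λ) - g(λ))`, the claimed expectation.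
-/

open Nat

section ExponentialGeneratingFunction

variable {a : ℕ → ℝ} {C K : ℝ}

theorem summable_abs_mul_pow_div_factorial (ha : ∀ j, |a j| ≤ C * K ^ j) (r : ℝ) :
    Summable fun j => |a j| * |r| ^ j / j ! := by
  refine .of_nonneg_of_le (fun j => by positivity) (fun j => ?_)
    ((Real.summable_pow_div_factorial (|K| * |r|)).mul_left |C|)
  have hbound : |a j| ≤ |C| * |K| ^ j :=
    calc |a j| ≤ C * K ^ j := ha j
      _ ≤ |C * K ^ j| := le_abs_self _
      _ = |C| * |K| ^ j := by rw [abs_mul, abs_pow]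
  calc |a j| * |r| ^ j / j ! ≤ |C| * |K| ^ j * |r| ^ j / j ! := by gcongr
    _ = |C| * ((|K| * |r|) ^ j / j !) := by rw [mul_pow]; ring

theorem summable_mul_pow_div_factorial (ha : ∀ j, |a j| ≤ C * K ^ j) (x : ℝ) :
    Summable fun j => a j * x ^ j / j ! :=
  .of_norm <| by
    simpa only [Real.norm_eq_abs, abs_div, abs_mul, abs_pow, Nat.abs_cast]
      using summable_abs_mul_pow_div_factorial ha x

theorem abs_succ_le_mul_pow (ha : ∀ j, |a j| ≤ C * K ^ j) (j : ℕ) :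
    |a (j + 1)| ≤ C * K * K ^ j :=
  calc |a (j + 1)| ≤ C * K ^ (j + 1) := ha (j + 1)
    _ = C * K * K ^ j := by ring

theorem hasDerivAt_pow_succ_div_factorial_succ (j : ℕ) (x : ℝ) :
    HasDerivAt (fun y : ℝ => y ^ (j + 1) / (j + 1)!) (x ^ j / j !) x := by
  refine ((hasDerivAt_pow (j + 1) x).div_const ((j + 1)! : ℝ)).congr_deriv ?_
  rw [Nat.factorial_succ]
  push_cast
  field_simp

theorem hasDerivAt_tsum_mul_pow_div_factorial (ha : ∀ j, |a j| ≤ C * K ^ j) (x : ℝ) :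
    HasDerivAt (fun y => ∑' j, a j * y ^ j / j !) (∑' j, a (j + 1) * x ^ j / j !) x := by
  -- After splitting off `a 0`, termwise derivatives carry no truncated exponent `j - 1`.
  have hshift : (fun y => ∑' j, a j * y ^ j / j !) =
      fun y => a 0 + ∑' j, a (j + 1) * (y ^ (j + 1) / (j + 1)!) := by
    funext y
    rw [(summable_mul_pow_div_factorial ha y).tsum_eq_zero_add]
    simp only [pow_zero, factorial_zero, cast_one, mul_one, div_one, mul_div_assoc]
  set R := |x| + 1
  have hx : x ∈ Set.Ioo (-R) R := abs_lt.mp (lt_add_one _)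
  have hbound : ∀ j, ∀ y ∈ Set.Ioo (-R) R,
      ‖a (j + 1) * (y ^ j / j !)‖ ≤ |a (j + 1)| * |R| ^ j / j ! := by
    intro j y hy
    rw [Real.norm_eq_abs, abs_mul, abs_div, abs_pow, Nat.abs_cast, ← mul_div_assoc]
    gcongr ?_ * ?_ ^ _ / _
    exact (abs_lt.mpr hy).le.trans (le_abs_self R)
  have hsummable : Summable fun j => a (j + 1) * (x ^ (j + 1) / (j + 1)!) := by
    simpa only [mul_div_assoc]
      using (summable_nat_add_iff 1).mpr (summable_mul_pow_div_factorial ha x)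
  rw [hshift]
  simp only [mul_div_assoc]
  exact (hasDerivAt_tsum_of_isPreconnected
    (summable_abs_mul_pow_div_factorial (abs_succ_le_mul_pow ha) R) isOpen_Ioo isPreconnected_Ioo
    (fun j y _ => (hasDerivAt_pow_succ_div_factorial_succ j y).const_mul (a (j + 1)))
    hbound hx hsummable hx).const_add (a 0)

theorem hasDerivAt_tsum_mul_exp_neg_mul_pow_div_factorial (ha : ∀ j, |a j| ≤ C * K ^ j)
    (lam : ℝ) :
    HasDerivAt (fun l : ℝ => ∑' j, a j * Real.exp (-l) * l ^ j / j !)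
      (∑' j, (a (j + 1) - a j) * Real.exp (-lam) * lam ^ j / j !) lam := by
  have hfactor : (fun l : ℝ => ∑' j, a j * Real.exp (-l) * l ^ j / j !) =
      fun l => Real.exp (-l) * ∑' j, a j * l ^ j / j ! := by
    funext l
    rw [← tsum_mul_left]
    congr 1 with j
    ring
  have hexp : HasDerivAt (fun l : ℝ => Real.exp (-l)) (-Real.exp (-lam)) lam := by
    simpa using (hasDerivAt_neg lam).exp
  rw [hfactor]
  refine (hexp.mul (hasDerivAt_tsum_mul_pow_div_factorial ha lam)).congr_deriv ?_
  calc -Real.exp (-lam) * ∑' j, a j * lam ^ j / j !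
        + Real.exp (-lam) * ∑' j, a (j + 1) * lam ^ j / j !
      = Real.exp (-lam) * ((∑' j, a (j + 1) * lam ^ j / j !) - ∑' j, a j * lam ^ j / j !) := by
        ring
    _ = Real.exp (-lam) * ∑' j, ((a (j + 1) * lam ^ j / j !) - a j * lam ^ j / j !) := by
        rw [(summable_mul_pow_div_factorial (abs_succ_le_mul_pow ha) lam).tsum_sub
          (summable_mul_pow_div_factorial ha lam)]
    _ = ∑' j, (a (j + 1) - a j) * Real.exp (-lam) * lam ^ j / j ! := by
        rw [← tsum_mul_left]
        congr 1 with j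
        ring

end ExponentialGeneratingFunction

theorem poisson_derivative_general (f : ℕ → ℝ) (C K : ℝ)
    (hf : ∀ j, |f j| ≤ C * K ^ j) (lam : ℝ) :
    HasDerivAt (fun l : ℝ => ∑' j : ℕ, f j * Real.exp (-l) * l ^ j / (Nat.factorial j))
      (∑' j : ℕ, (f (j + 1) - f j) * Real.exp (-lam) * lam ^ j / (Nat.factorial j)) lam :=
  hasDerivAt_tsum_mul_exp_neg_mul_pow_div_factorial hf lam

/-- If `|f j| ≤ C K^j`, then `λ ↦ E_{X ~ Poisson(λ)}[f X]` is differentiable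
on `(0,∞)` with derivative `E_{X ~ Poisson(λ)}[f (X+1) − f X]`. -/
theorem poisson_derivative (f : ℕ → ℝ) (C K : ℝ) (hC : 0 < C) (hK : 0 < K)
    (hf : ∀ j, |f j| ≤ C * K ^ j) (lam : ℝ) (hlam : 0 < lam) :
    HasDerivAt (fun l : ℝ => ∑' j : ℕ, f j * Real.exp (-l) * l ^ j / (Nat.factorial j))
      (∑' j : ℕ, (f (j + 1) - f j) * Real.exp (-lam) * lam ^ j / (Nat.factorial j)) lam :=
  poisson_derivative_general f C K hf lam
end
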